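/- Let G=(V,E) be a D-regular finite simple graph with n = |V| vertices (n even) and m = nD/2 edges, and let δ > 0. Let σ be an ordering of V that minimizes SVC_G over all orderings (all edge weights equal to 1), and suppose SVC_G(σ) ≤ (1/4 + δ)·n·m, where SVC is normalized so that SVC_G(σ) = Σ_{t=0}^{n−1} u_t with u_t the number of edges having both endpoints outside the first t visited vertices. Then u_{n/2} ≤ √δ·m; that is, the optimal ordering covers at least a (1−√δ) fraction of the edges within the first n/2 steps. -/

import Mathlib

/-- The position (in `{1, …, n}`) at which vertex `v` is visited by the ordering `σ`. -/
def vertexPos {V : Type*} [Fintype V] (σ : Fin (Fintype.card V) ≃ V) (v : V) : ℕ :=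
  (σ.symm v : ℕ) + 1

/-- The cover time of an edge `e : Sym2 V`: the earliest position of one of its endpoints. -/
def edgeCoverTime {V : Type*} [Fintype V] (σ : Fin (Fintype.card V) ≃ V) : Sym2 V → ℕ :=
  Sym2.lift ⟨fun u w => min (vertexPos σ u) (vertexPos σ w), fun _ _ => min_comm _ _⟩

/-- `u_t`: the number of edges of `G` having both endpoints outside the first `t` visited
vertices (equivalently, edges with cover time `> t`). -/
noncomputable def numUncovered {V : Type*} [Fintype V] [DecidableEq V] (G : SimpleGraph V)
    [DecidableRel G.Adj] (σ : Fin (Fintype.card V) ≃ V) (t : ℕ) : ℕ :=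
  (G.edgeFinset.filter (fun e => t < edgeCoverTime σ e)).card

/-- The sum vertex cover value `SVC_G(σ) = Σ_{t=0}^{n−1} u_t` of an unweighted graph. -/
noncomputable def SVC {V : Type*} [Fintype V] [DecidableEq V] (G : SimpleGraph V)
    [DecidableRel G.Adj] (σ : Fin (Fintype.card V) ≃ V) : ℕ :=
  ∑ t ∈ Finset.range (Fintype.card V), numUncovered G σ t

open Finset

set_option maxHeartbeats 1000000

/-! ### Auxiliary lemmas -/

private lemma cover_iff {V : Type*} [Fintype V] (σ : Fin (Fintype.card V) ≃ V) (t : ℕ)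
    (e : Sym2 V) : t < edgeCoverTime σ e ↔ ∀ w ∈ e, t ≤ (σ.symm w : ℕ) := by
  induction e using Sym2.ind with
  | _ x y =>
    simp only [edgeCoverTime, Sym2.lift_mk, lt_min_iff, Sym2.mem_iff, vertexPos]
    constructor
    · rintro ⟨h1, h2⟩ w hw
      rcases hw with rfl | rfl <;> omega
    · intro h
      exact ⟨by have := h x (Or.inl rfl); omega, by have := h y (Or.inr rfl); omega⟩

private lemma numUncovered_eq_card {V : Type*} [Fintype V] [DecidableEq V] (G : SimpleGraph V)
    [DecidableRel G.Adj] (σ : Fin (Fintype.card V) ≃ V) (t : ℕ) :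
    numUncovered G σ t
      = (G.edgeFinset.filter (fun e => ∀ w ∈ e, t ≤ (σ.symm w : ℕ))).card := by
  unfold numUncovered
  congr 1
  apply Finset.filter_congr
  intro e _
  exact cover_iff σ t e

/-- telescoping sum of decrements -/
private lemma telescope_sum (u : ℕ → ℕ) (hmono : ∀ t, u (t + 1) ≤ u t) :
    ∀ t t', t ≤ t' → u t = u t' + ∑ s ∈ Finset.Ico t t', (u s - u (s + 1)) := by
  intro t t' h
  induction t' with
  | zero =>
    have : t = 0 := by omega
    subst this
    simp
  | succ t' ih =>
    by_cases h' : t ≤ t'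
    · rw [Finset.sum_Ico_succ_top h']
      have h1 := ih h'
      have h2 := hmono t'
      omega
    · have : t = t' + 1 := by omega
      subst this
      simp

/-- exchange of a double sum -/
private lemma sum_exchange (f : ℕ → ℕ) :
    ∀ N, ∑ t ∈ Finset.range N, ∑ s ∈ Finset.Ico t N, f s
      = ∑ s ∈ Finset.range N, (s + 1) * f s := by
  intro N
  induction N with
  | zero => simp
  | succ N ih =>
    rw [Finset.sum_range_succ (f := fun s => (s + 1) * f s), ← ih]
    have h1 : ∀ t ∈ Finset.range (N + 1),
        ∑ s ∈ Finset.Ico t (N + 1), f s = (∑ s ∈ Finset.Ico t N, f s) + f N := by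
      intro t ht
      rw [Finset.mem_range] at ht
      rw [Finset.sum_Ico_succ_top (by omega : t ≤ N)]
    rw [Finset.sum_congr rfl h1, Finset.sum_add_distrib, Finset.sum_const, Finset.card_range,
      Finset.sum_range_succ (f := fun t => ∑ s ∈ Finset.Ico t N, f s)]
    simp only [Finset.Ico_self, Finset.sum_empty, add_zero, smul_eq_mul]

/-- key quadratic estimate: if all terms are `≤ M` then `(Σ a)² ≤ 2 M Σ (j+1) a_j`. -/
private lemma key_quad (M : ℕ) (a : ℕ → ℕ) :
    ∀ k, (∀ j, j < k → a j ≤ M) →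
      (∑ j ∈ Finset.range k, a j) ^ 2 ≤ 2 * M * ∑ j ∈ Finset.range k, (j + 1) * a j := by
  intro k
  induction k with
  | zero => simp
  | succ k ih =>
    intro hM
    have h1 := ih (fun j hj => hM j (by omega))
    have hS : ∑ j ∈ Finset.range k, a j ≤ k * M := by
      calc ∑ j ∈ Finset.range k, a j ≤ ∑ _j ∈ Finset.range k, M :=
            Finset.sum_le_sum (fun j hj => hM j (by have := Finset.mem_range.mp hj; omega))
        _ = k * M := by simp [mul_comm]
    rw [Finset.sum_range_succ, Finset.sum_range_succ]
    have hak := hM k (by omega)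
    nlinarith [Nat.mul_le_mul hS hak, Nat.mul_le_mul hak hak]

/-- invariance of `numUncovered` under adjacent swaps away from the cut point -/
private lemma swap_invariant {V : Type*} [Fintype V] [DecidableEq V] (G : SimpleGraph V)
    [DecidableRel G.Adj] (σ : Fin (Fintype.card V) ≃ V) (k : ℕ) (hk : k + 1 < Fintype.card V)
    (t : ℕ) (ht : t ≠ k + 1) :
    numUncovered G ((Equiv.swap (⟨k, by omega⟩ : Fin (Fintype.card V)) ⟨k + 1, hk⟩).trans σ) t
      = numUncovered G σ t := by
  rw [numUncovered_eq_card, numUncovered_eq_card]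
  congr 1
  apply Finset.filter_congr
  intro e _
  refine forall_congr' fun w => imp_congr_right fun _ => ?_
  have hτ : ((Equiv.swap (⟨k, by omega⟩ : Fin (Fintype.card V)) ⟨k + 1, hk⟩).trans σ).symm w
      = Equiv.swap (⟨k, by omega⟩ : Fin (Fintype.card V)) ⟨k + 1, hk⟩ (σ.symm w) := by
    rw [Equiv.symm_trans_apply, Equiv.symm_swap]
  rw [hτ, Equiv.swap_apply_def]
  have hik : ((⟨k, by omega⟩ : Fin (Fintype.card V)) : ℕ) = k := rfl
  have hjk : ((⟨k + 1, hk⟩ : Fin (Fintype.card V)) : ℕ) = k + 1 := rfl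
  split_ifs with h1 h2
  · have hw : (σ.symm w : ℕ) = k := by rw [h1]
    rw [hjk, hw]
    omega
  · have hw : (σ.symm w : ℕ) = k + 1 := by rw [h2]
    rw [hik, hw]
    omega
  · rfl

/-- characterization of `numUncovered` at the cut point `k+1` after swapping -/
private lemma swap_at {V : Type*} [Fintype V] [DecidableEq V] (G : SimpleGraph V)
    [DecidableRel G.Adj] (σ : Fin (Fintype.card V) ≃ V) (k : ℕ) (hk : k + 1 < Fintype.card V) :
    numUncovered G ((Equiv.swap (⟨k, by omega⟩ : Fin (Fintype.card V)) ⟨k + 1, hk⟩).trans σ)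
        (k + 1)
      = (G.edgeFinset.filter
          (fun e => ∀ w ∈ e, (σ.symm w : ℕ) = k ∨ k + 2 ≤ (σ.symm w : ℕ))).card := by
  rw [numUncovered_eq_card]
  congr 1
  apply Finset.filter_congr
  intro e _
  refine forall_congr' fun w => imp_congr_right fun _ => ?_
  have hτ : ((Equiv.swap (⟨k, by omega⟩ : Fin (Fintype.card V)) ⟨k + 1, hk⟩).trans σ).symm w
      = Equiv.swap (⟨k, by omega⟩ : Fin (Fintype.card V)) ⟨k + 1, hk⟩ (σ.symm w) := by
    rw [Equiv.symm_trans_apply, Equiv.symm_swap]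
  rw [hτ, Equiv.swap_apply_def]
  have hik : ((⟨k, by omega⟩ : Fin (Fintype.card V)) : ℕ) = k := rfl
  have hjk : ((⟨k + 1, hk⟩ : Fin (Fintype.card V)) : ℕ) = k + 1 := rfl
  split_ifs with h1 h2
  · have hw : (σ.symm w : ℕ) = k := by rw [h1]
    rw [hjk, hw]
    omega
  · have hw : (σ.symm w : ℕ) = k + 1 := by rw [h2]
    rw [hik, hw]
    omega
  · have hne1 : (σ.symm w : ℕ) ≠ k := by
      intro hc
      exact h1 (Fin.ext hc)
    have hne2 : (σ.symm w : ℕ) ≠ k + 1 := by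
      intro hc
      exact h2 (Fin.ext hc)
    omega

/-- the convexity (supermodularity) of the sequence `u_t` for an optimal ordering -/
private lemma convex_step {V : Type*} [Fintype V] [DecidableEq V] (G : SimpleGraph V)
    [DecidableRel G.Adj] (σ : Fin (Fintype.card V) ≃ V)
    (hopt : ∀ σ' : Fin (Fintype.card V) ≃ V, SVC G σ ≤ SVC G σ') (k : ℕ)
    (hk : k + 1 < Fintype.card V) :
    2 * numUncovered G σ (k + 1) ≤ numUncovered G σ k + numUncovered G σ (k + 2) := by
  set τ := (Equiv.swap (⟨k, by omega⟩ : Fin (Fintype.card V)) ⟨k + 1, hk⟩).trans σ with hτdef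
  -- optimality gives u_{k+1} ≤ u'_{k+1}
  have hle : numUncovered G σ (k + 1) ≤ numUncovered G τ (k + 1) := by
    have h := hopt τ
    unfold SVC at h
    have hmem : k + 1 ∈ Finset.range (Fintype.card V) := Finset.mem_range.mpr (by omega)
    rw [← Finset.add_sum_erase _ (fun t => numUncovered G σ t) hmem,
      ← Finset.add_sum_erase _ (fun t => numUncovered G τ t) hmem] at h
    have heq : ∑ s ∈ (Finset.range (Fintype.card V)).erase (k + 1), numUncovered G τ s
        = ∑ s ∈ (Finset.range (Fintype.card V)).erase (k + 1), numUncovered G σ s := by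
      apply Finset.sum_congr rfl
      intro s hs
      exact swap_invariant G σ k hk s (Finset.ne_of_mem_erase hs)
    rw [heq] at h
    omega
  rw [swap_at G σ k hk] at hle
  -- counting
  have c1 : (G.edgeFinset.filter (fun e => ∀ w ∈ e, k ≤ (σ.symm w : ℕ))).card
      = ((G.edgeFinset.filter (fun e => ∀ w ∈ e, k ≤ (σ.symm w : ℕ))).filter
            (fun e => ∃ w ∈ e, (σ.symm w : ℕ) = k + 1)).card
        + ((G.edgeFinset.filter (fun e => ∀ w ∈ e, k ≤ (σ.symm w : ℕ))).filter
            (fun e => ¬ ∃ w ∈ e, (σ.symm w : ℕ) = k + 1)).card :=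
    (Finset.card_filter_add_card_filter_not _).symm
  have c2 : (G.edgeFinset.filter (fun e => ∀ w ∈ e, k + 1 ≤ (σ.symm w : ℕ))).card
      = ((G.edgeFinset.filter (fun e => ∀ w ∈ e, k + 1 ≤ (σ.symm w : ℕ))).filter
            (fun e => ∃ w ∈ e, (σ.symm w : ℕ) = k + 1)).card
        + ((G.edgeFinset.filter (fun e => ∀ w ∈ e, k + 1 ≤ (σ.symm w : ℕ))).filter
            (fun e => ¬ ∃ w ∈ e, (σ.symm w : ℕ) = k + 1)).card :=
    (Finset.card_filter_add_card_filter_not _).symm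
  have c3 : ((G.edgeFinset.filter (fun e => ∀ w ∈ e, k ≤ (σ.symm w : ℕ))).filter
        (fun e => ¬ ∃ w ∈ e, (σ.symm w : ℕ) = k + 1)).card
      = (G.edgeFinset.filter
          (fun e => ∀ w ∈ e, (σ.symm w : ℕ) = k ∨ k + 2 ≤ (σ.symm w : ℕ))).card := by
    congr 1
    rw [Finset.filter_filter]
    apply Finset.filter_congr
    intro e _
    constructor
    · rintro ⟨h1, h2⟩ w hw
      have hge := h1 w hw
      have hne : (σ.symm w : ℕ) ≠ k + 1 := fun hc => h2 ⟨w, hw, hc⟩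
      omega
    · intro hC
      refine ⟨fun w hw => ?_, fun hc => ?_⟩
      · have := hC w hw
        omega
      · obtain ⟨w, hw, hval⟩ := hc
        have := hC w hw
        omega
  have c4 : ((G.edgeFinset.filter (fun e => ∀ w ∈ e, k + 1 ≤ (σ.symm w : ℕ))).filter
        (fun e => ¬ ∃ w ∈ e, (σ.symm w : ℕ) = k + 1)).card
      = (G.edgeFinset.filter (fun e => ∀ w ∈ e, k + 2 ≤ (σ.symm w : ℕ))).card := by
    congr 1
    rw [Finset.filter_filter]
    apply Finset.filter_congr
    intro e _
    constructor
    · rintro ⟨h1, h2⟩ w hw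
      have hge := h1 w hw
      have hne : (σ.symm w : ℕ) ≠ k + 1 := fun hc => h2 ⟨w, hw, hc⟩
      omega
    · intro hC
      refine ⟨fun w hw => by have := hC w hw; omega, fun hc => ?_⟩
      obtain ⟨w, hw, hval⟩ := hc
      have := hC w hw
      omega
  have c5 : ((G.edgeFinset.filter (fun e => ∀ w ∈ e, k + 1 ≤ (σ.symm w : ℕ))).filter
        (fun e => ∃ w ∈ e, (σ.symm w : ℕ) = k + 1)).card
      ≤ ((G.edgeFinset.filter (fun e => ∀ w ∈ e, k ≤ (σ.symm w : ℕ))).filter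
        (fun e => ∃ w ∈ e, (σ.symm w : ℕ) = k + 1)).card := by
    apply Finset.card_le_card
    intro e he
    rw [Finset.mem_filter] at he ⊢
    refine ⟨?_, he.2⟩
    rw [Finset.mem_filter] at he ⊢
    obtain ⟨⟨heE, hall⟩, _⟩ := he
    exact ⟨heE, fun w hw => by have := hall w hw; omega⟩
  rw [numUncovered_eq_card G σ k, numUncovered_eq_card G σ (k + 1),
    numUncovered_eq_card G σ (k + 2)]
  rw [numUncovered_eq_card G σ (k + 1)] at hle
  omega

/-- the degree step: consecutive values of `u` differ by at most the degree -/
private lemma deg_step {V : Type*} [Fintype V] [DecidableEq V] (G : SimpleGraph V)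
    [DecidableRel G.Adj] (σ : Fin (Fintype.card V) ≃ V) (t : ℕ) (ht : t < Fintype.card V) :
    numUncovered G σ t ≤ numUncovered G σ (t + 1) + G.degree (σ ⟨t, ht⟩) := by
  rw [← SimpleGraph.card_incidenceFinset_eq_degree, SimpleGraph.incidenceFinset_eq_filter]
  rw [numUncovered_eq_card, numUncovered_eq_card]
  have c1 : (G.edgeFinset.filter (fun e => ∀ w ∈ e, t ≤ (σ.symm w : ℕ))).card
      = ((G.edgeFinset.filter (fun e => ∀ w ∈ e, t ≤ (σ.symm w : ℕ))).filter
            (fun e => ∀ w ∈ e, t + 1 ≤ (σ.symm w : ℕ))).card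
        + ((G.edgeFinset.filter (fun e => ∀ w ∈ e, t ≤ (σ.symm w : ℕ))).filter
            (fun e => ¬ ∀ w ∈ e, t + 1 ≤ (σ.symm w : ℕ))).card :=
    (Finset.card_filter_add_card_filter_not _).symm
  have c2 : ((G.edgeFinset.filter (fun e => ∀ w ∈ e, t ≤ (σ.symm w : ℕ))).filter
        (fun e => ∀ w ∈ e, t + 1 ≤ (σ.symm w : ℕ))).card
      = (G.edgeFinset.filter (fun e => ∀ w ∈ e, t + 1 ≤ (σ.symm w : ℕ))).card := by
    congr 1
    rw [Finset.filter_filter]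
    apply Finset.filter_congr
    intro e _
    constructor
    · rintro ⟨_, h2⟩
      exact h2
    · intro h
      exact ⟨fun w hw => by have := h w hw; omega, h⟩
  have c3 : ((G.edgeFinset.filter (fun e => ∀ w ∈ e, t ≤ (σ.symm w : ℕ))).filter
        (fun e => ¬ ∀ w ∈ e, t + 1 ≤ (σ.symm w : ℕ))).card
      ≤ (G.edgeFinset.filter (fun e => σ ⟨t, ht⟩ ∈ e)).card := by
    apply Finset.card_le_card
    intro e he
    rw [Finset.mem_filter] at he
    obtain ⟨he1, he2⟩ := he
    rw [Finset.mem_filter] at he1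
    obtain ⟨heE, hall⟩ := he1
    push_neg at he2
    obtain ⟨w, hw, hwlt⟩ := he2
    have hge := hall w hw
    have hwt : (σ.symm w : ℕ) = t := by omega
    have hww : σ.symm w = ⟨t, ht⟩ := Fin.ext hwt
    rw [Finset.mem_filter]
    refine ⟨heE, ?_⟩
    have happ : σ (σ.symm w) = w := σ.apply_symm_apply w
    rw [hww] at happ
    rw [happ]
    exact hw
  omega

/-- the purely numeric part of the argument -/
private lemma main_numeric (n hh D m : ℕ) (u : ℕ → ℕ) (δ : ℝ) (hδ : 0 < δ)
    (hn2 : n = 2 * hh)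
    (hmono : ∀ t t', t ≤ t' → u t' ≤ u t)
    (hu0 : u 0 = m)
    (hlast : u (n - 1) = 0)
    (hdeg : ∀ t, t < n → u t ≤ u (t + 1) + D)
    (hconv : ∀ k, k + 1 < n → 2 * u (k + 1) ≤ u k + u (k + 2))
    (hDm : hh * D = m)
    (hupos : 1 ≤ u hh)
    (hval : ((∑ t ∈ Finset.range n, u t : ℕ) : ℝ) ≤ (1 / 4 + δ) * n * m) :
    (u hh : ℝ) ≤ Real.sqrt δ * m := by
  -- basic positivity facts
  have hmpos : 1 ≤ m := by
    have := hmono 0 hh (Nat.zero_le _)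
    omega
  have hhpos : 1 ≤ hh := by
    rcases Nat.eq_zero_or_pos hh with h | h
    · exfalso; rw [h] at hDm; simp at hDm; omega
    · exact h
  have hDpos : 1 ≤ D := by
    rcases Nat.eq_zero_or_pos D with h | h
    · exfalso; rw [h] at hDm; simp at hDm; omega
    · exact h
  have hhn : hh + 1 ≤ n - 1 := by
    by_contra hcon
    push_neg at hcon
    have h1 : n - 1 ≤ hh := by omega
    have := hmono (n - 1) hh h1
    omega
  -- decrements
  set d : ℕ → ℕ := fun s => u (s - 1) - u s with hd
  have hdsucc : ∀ s, d (s + 1) = u s - u (s + 1) := by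
    intro s
    simp [hd]
  have hdval : ∀ s, u s = u (s + 1) + d (s + 1) := by
    intro s
    have h1 := hmono s (s + 1) (by omega)
    rw [hdsucc]
    omega
  have hdD : ∀ s, s < n → d (s + 1) ≤ D := by
    intro s hs
    have h1 := hdeg s hs
    have h2 := hdval s
    omega
  have hdmono : ∀ s, 1 ≤ s → s + 1 ≤ n - 1 → d (s + 1) ≤ d s := by
    intro s hs hsn
    have hc := hconv (s - 1) (by omega)
    have h1 := hdval (s - 1)
    have h2 := hdval s
    have hs1 : s - 1 + 1 = s := by omega
    have hs2 : s - 1 + 2 = s + 1 := by omega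
    rw [hs1] at hc h1
    rw [hs2] at hc
    omega
  have hdchain : ∀ s s', 1 ≤ s → s ≤ s' → s' ≤ n - 1 → d s' ≤ d s := by
    intro s s' hs hss'
    induction s' with
    | zero => omega
    | succ s' ih =>
      intro hn'
      by_cases h' : s = s' + 1
      · rw [h']
      · have h1 : s ≤ s' := by omega
        have h2 : s' ≤ n - 1 := by omega
        have h3 := ih h1 h2
        have h4 := hdmono s' (by omega) (by omega)
        omega
  -- telescoping
  have htel : ∀ t t', t ≤ t' → u t = u t' + ∑ s ∈ Finset.Ico t t', d (s + 1) := by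
    intro t t' h
    have h1 := telescope_sum u (fun s => hmono s (s + 1) (by omega)) t t' h
    have heq : ∑ s ∈ Finset.Ico t t', (u s - u (s + 1)) = ∑ s ∈ Finset.Ico t t', d (s + 1) :=
      Finset.sum_congr rfl (fun s _ => (hdsucc s).symm)
    rw [heq] at h1
    exact h1
  set v := d (hh + 1) with hv
  have hvleu : v ≤ u hh := by
    have := hdval hh
    omega
  have hv1 : 1 ≤ v := by
    by_contra hcon
    push_neg at hcon
    have hv0 : v = 0 := by omega
    have h1 := htel hh (n - 1) (by omega)
    have h2 : ∑ s ∈ Finset.Ico hh (n - 1), d (s + 1) = 0 := by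
      apply Finset.sum_eq_zero
      intro s hs
      rw [Finset.mem_Ico] at hs
      have := hdchain (hh + 1) (s + 1) (by omega) (by omega) (by omega)
      omega
    rw [h2, hlast] at h1
    omega
  have hvD : v ≤ D := hdD hh (by omega)
  -- first half: d(s+1) ≥ v for s < hh
  set ee : ℕ → ℕ := fun s => d (s + 1) - v with hee
  have hde : ∀ s, s < hh → d (s + 1) = v + ee s := by
    intro s hs
    have h1 := hdchain (s + 1) (hh + 1) (by omega) (by omega) (by omega)
    simp only [hee]
    omega
  have heM : ∀ s, s < hh → ee s ≤ D - v := by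
    intro s hs
    have h1 := hdD s (by omega)
    simp only [hee]
    omega
  have hesum : u hh + (hh * v + ∑ s ∈ Finset.range hh, ee s) = m := by
    have h1 := htel 0 hh (Nat.zero_le _)
    rw [hu0] at h1
    have h2 : ∑ s ∈ Finset.Ico 0 hh, d (s + 1) = ∑ s ∈ Finset.range hh, (v + ee s) := by
      rw [← Finset.range_eq_Ico]
      exact Finset.sum_congr rfl (fun s hs => hde s (Finset.mem_range.mp hs))
    rw [h2, Finset.sum_add_distrib, Finset.sum_const, Finset.card_range, smul_eq_mul] at h1
    linarith
  have hvDs : v < D := by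
    rcases Nat.lt_or_ge v D with h | h
    · exact h
    · exfalso
      have hvd : v = D := by omega
      rw [hvd] at hesum
      have : u hh + (hh * D + ∑ s ∈ Finset.range hh, ee s) = hh * D := by
        rw [hesum, hDm]
      have h0 : 0 ≤ ∑ s ∈ Finset.range hh, ee s := Nat.zero_le _
      omega
  have hkey1 : (∑ s ∈ Finset.range hh, ee s) ^ 2
      ≤ 2 * (D - v) * ∑ s ∈ Finset.range hh, (s + 1) * ee s :=
    key_quad (D - v) ee hh heM
  -- sum over first half
  have hS1 : ∑ t ∈ Finset.range hh, u t
      = hh * u hh + ∑ s ∈ Finset.range hh, (s + 1) * d (s + 1) := by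
    have h1 : ∀ t ∈ Finset.range hh, u t = u hh + ∑ s ∈ Finset.Ico t hh, d (s + 1) := by
      intro t ht
      exact htel t hh (le_of_lt (Finset.mem_range.mp ht))
    rw [Finset.sum_congr rfl h1, Finset.sum_add_distrib, Finset.sum_const, Finset.card_range,
      sum_exchange (fun s => d (s + 1)) hh, smul_eq_mul]
  have hsum_d : ∑ s ∈ Finset.range hh, (s + 1) * d (s + 1)
      = v * (∑ s ∈ Finset.range hh, (s + 1)) + ∑ s ∈ Finset.range hh, (s + 1) * ee s := by
    have h1 : ∀ s ∈ Finset.range hh, (s + 1) * d (s + 1) = v * (s + 1) + (s + 1) * ee s := by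
      intro s hs
      rw [hde s (Finset.mem_range.mp hs)]
      ring
    rw [Finset.sum_congr rfl h1, Finset.sum_add_distrib, ← Finset.mul_sum]
  have hGauss : 2 * (∑ s ∈ Finset.range hh, (s + 1)) = hh * (hh + 1) := by
    have h1 : (∑ i ∈ Finset.range (hh + 1), i) = ∑ s ∈ Finset.range hh, (s + 1) := by
      rw [Finset.sum_range_succ']
      simp
    have h2 := Finset.sum_range_id_mul_two (hh + 1)
    rw [h1] at h2
    simp only [Nat.add_sub_cancel] at h2
    calc 2 * (∑ s ∈ Finset.range hh, (s + 1)) = (∑ s ∈ Finset.range hh, (s + 1)) * 2 := by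
          ring
      _ = (hh + 1) * hh := h2
      _ = hh * (hh + 1) := by ring
  -- second half
  have hsecond_pt : ∀ j, hh + j ≤ n - 1 → u hh ≤ u (hh + j) + j * v := by
    intro j
    induction j with
    | zero => simp
    | succ j ih =>
      intro hj
      have h1 := ih (by omega)
      have h2 := hdval (hh + j)
      have h3 : d (hh + j + 1) ≤ v :=
        hdchain (hh + 1) (hh + j + 1) (by omega) (by omega) (by omega)
      have h4 : (j + 1) * v = j * v + v := by ring
      have h5 : hh + (j + 1) = hh + j + 1 := by omega
      rw [h5, h4]
      linarith
  set K := u hh / v with hK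
  have hK1 : 1 ≤ K := (Nat.one_le_div_iff (by omega)).mpr hvleu
  have hKv : v * K + u hh % v = u hh := Nat.div_add_mod (u hh) v
  have hrv : u hh % v < v := Nat.mod_lt _ (by omega)
  have hKvle : K * v ≤ u hh := Nat.div_mul_le_self (u hh) v
  have hKn : hh + K ≤ n - 1 := by
    have h1 := hsecond_pt (n - 1 - hh) (by omega)
    have h2 : hh + (n - 1 - hh) = n - 1 := by omega
    rw [h2, hlast] at h1
    have h3 : K * v ≤ (n - 1 - hh) * v := le_trans hKvle (by linarith)
    have h4 : K ≤ n - 1 - hh := Nat.le_of_mul_le_mul_right h3 (by omega)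
    omega
  have hsecond : ∀ j, j < K → u hh ≤ u (hh + j) + j * v := by
    intro j hj
    exact hsecond_pt j (by omega)
  have hS2 : ∑ j ∈ Finset.range K, u (hh + j) ≤ ∑ t ∈ Finset.Ico hh n, u t := by
    rw [Finset.sum_Ico_eq_sum_range]
    apply Finset.sum_le_sum_of_subset
    apply Finset.range_subset_range.mpr
    omega
  have hsplit : ∑ t ∈ Finset.range n, u t
      = (∑ t ∈ Finset.range hh, u t) + ∑ t ∈ Finset.Ico hh n, u t :=
    (Finset.sum_range_add_sum_Ico _ (by omega)).symm
  -- pass to the reals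
  have hvR1 : (1 : ℝ) ≤ (v : ℝ) := by exact_mod_cast hv1
  have hvDR : (v : ℝ) < (D : ℝ) := by exact_mod_cast hvDs
  have hDR1 : (1 : ℝ) ≤ (D : ℝ) := by exact_mod_cast hDpos
  have hhR1 : (1 : ℝ) ≤ (hh : ℝ) := by exact_mod_cast hhpos
  have huR1 : (1 : ℝ) ≤ (u hh : ℝ) := by exact_mod_cast hupos
  have hKR1 : (1 : ℝ) ≤ (K : ℝ) := by exact_mod_cast hK1
  have hrR0 : (0 : ℝ) ≤ ((u hh % v : ℕ) : ℝ) := Nat.cast_nonneg _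
  have hrRv : ((u hh % v : ℕ) : ℝ) < (v : ℝ) := by exact_mod_cast hrv
  have huKr : (u hh : ℝ) = (v : ℝ) * (K : ℝ) + ((u hh % v : ℕ) : ℝ) := by
    exact_mod_cast hKv.symm
  have hDmR : (hh : ℝ) * (D : ℝ) = (m : ℝ) := by exact_mod_cast hDm
  have hesumR : (u hh : ℝ)
      + ((hh : ℝ) * (v : ℝ) + ((∑ s ∈ Finset.range hh, ee s : ℕ) : ℝ)) = (m : ℝ) := by
    exact_mod_cast hesum
  have hkey1R : ((∑ s ∈ Finset.range hh, ee s : ℕ) : ℝ) ^ 2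
      ≤ 2 * ((D : ℝ) - (v : ℝ)) * ((∑ s ∈ Finset.range hh, (s + 1) * ee s : ℕ) : ℝ) := by
    have h2 : (((∑ s ∈ Finset.range hh, ee s) ^ 2 : ℕ) : ℝ)
        ≤ ((2 * (D - v) * ∑ s ∈ Finset.range hh, (s + 1) * ee s : ℕ) : ℝ) :=
      Nat.cast_le.mpr hkey1
    rw [Nat.cast_mul, Nat.cast_mul, Nat.cast_pow, Nat.cast_sub hvD, Nat.cast_ofNat] at h2
    exact h2
  have hT1R0 : (0 : ℝ) ≤ ((∑ s ∈ Finset.range hh, (s + 1) * ee s : ℕ) : ℝ) := Nat.cast_nonneg _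
  -- lower bound for the second-half sum
  have hsumjR : ∑ j ∈ Finset.range K, ((u hh : ℝ) - (j : ℝ) * (v : ℝ))
      ≤ ((∑ t ∈ Finset.Ico hh n, u t : ℕ) : ℝ) := by
    have h1 : ∑ j ∈ Finset.range K, ((u hh : ℝ) - (j : ℝ) * (v : ℝ))
        ≤ ∑ j ∈ Finset.range K, ((u (hh + j) : ℝ)) := by
      apply Finset.sum_le_sum
      intro j hj
      have h2 := hsecond j (Finset.mem_range.mp hj)
      have h3 : (u hh : ℝ) ≤ (u (hh + j) : ℝ) + (j : ℝ) * (v : ℝ) := by exact_mod_cast h2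
      linarith
    have h4 : ((∑ j ∈ Finset.range K, u (hh + j) : ℕ) : ℝ)
        ≤ ((∑ t ∈ Finset.Ico hh n, u t : ℕ) : ℝ) := Nat.cast_le.mpr hS2
    rw [Nat.cast_sum] at h4
    exact le_trans h1 h4
  have hSgR : ∑ j ∈ Finset.range K, ((u hh : ℝ) - (j : ℝ) * (v : ℝ))
      = (K : ℝ) * (u hh : ℝ) - (v : ℝ) * ((K : ℝ) * ((K : ℝ) - 1)) / 2 := by
    rw [Finset.sum_sub_distrib, Finset.sum_const, Finset.card_range]
    have h3 := Finset.sum_range_id_mul_two K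
    have h4 := congrArg (fun x : ℕ => (x : ℝ)) h3
    push_cast [Nat.cast_sub hK1] at h4
    have h5 : (∑ j ∈ Finset.range K, (j : ℝ)) = (K : ℝ) * ((K : ℝ) - 1) / 2 := by
      linarith
    rw [← Finset.sum_mul, h5]
    push_cast
    ring
  -- lower bound for the whole sum
  have hcast1 : ((∑ t ∈ Finset.range hh, u t : ℕ) : ℝ)
      = (hh : ℝ) * (u hh : ℝ)
        + ((v : ℝ) * ((∑ s ∈ Finset.range hh, (s + 1) : ℕ) : ℝ)
          + ((∑ s ∈ Finset.range hh, (s + 1) * ee s : ℕ) : ℝ)) := by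
    rw [hS1, hsum_d]
    push_cast
    ring
  have hSVClower : (hh : ℝ) * (u hh : ℝ)
      + ((v : ℝ) * ((∑ s ∈ Finset.range hh, (s + 1) : ℕ) : ℝ)
        + ((∑ s ∈ Finset.range hh, (s + 1) * ee s : ℕ) : ℝ))
      + ((K : ℝ) * (u hh : ℝ) - (v : ℝ) * ((K : ℝ) * ((K : ℝ) - 1)) / 2)
      ≤ ((∑ t ∈ Finset.range n, u t : ℕ) : ℝ) := by
    have hc : ((∑ t ∈ Finset.range n, u t : ℕ) : ℝ)
        = ((∑ t ∈ Finset.range hh, u t : ℕ) : ℝ)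
          + ((∑ t ∈ Finset.Ico hh n, u t : ℕ) : ℝ) := by
      rw [hsplit]
      push_cast
      ring
    rw [hc, hcast1]
    rw [hSgR] at hsumjR
    linarith
  have hGaussR : 2 * ((∑ s ∈ Finset.range hh, (s + 1) : ℕ) : ℝ) = (hh : ℝ) * ((hh : ℝ) + 1) := by
    exact_mod_cast hGauss
  -- final algebra, in ℝ
  have hvR0 : (0 : ℝ) < (v : ℝ) := by linarith
  have hDvR0 : (0 : ℝ) < (D : ℝ) - (v : ℝ) := by linarith
  have hDR0 : (0 : ℝ) < (D : ℝ) := by linarith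
  have hq2 : (u hh : ℝ) ^ 2 / (2 * (v : ℝ))
      ≤ (K : ℝ) * (u hh : ℝ) - (v : ℝ) * ((K : ℝ) * ((K : ℝ) - 1)) / 2 := by
    rw [div_le_iff₀ (by linarith)]
    nlinarith [sq_nonneg ((u hh % v : ℕ) : ℝ),
      mul_nonneg (mul_nonneg hvR0.le hvR0.le) (by linarith : (0 : ℝ) ≤ (K : ℝ) - 1)]
  have hq1 : ((∑ s ∈ Finset.range hh, ee s : ℕ) : ℝ) ^ 2 / (2 * ((D : ℝ) - (v : ℝ)))
      ≤ ((∑ s ∈ Finset.range hh, (s + 1) * ee s : ℕ) : ℝ) := by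
    rw [div_le_iff₀ (by linarith)]
    linarith [hkey1R]
  have hGGge : (v : ℝ) * ((hh : ℝ) ^ 2) / 2
      ≤ (v : ℝ) * ((∑ s ∈ Finset.range hh, (s + 1) : ℕ) : ℝ) := by
    have h1 : ((hh : ℝ) ^ 2) / 2 ≤ ((∑ s ∈ Finset.range hh, (s + 1) : ℕ) : ℝ) := by
      nlinarith [hGaussR]
    nlinarith [hvR0]
  -- the core inequality  SVC ≥ hm/2 + 2u²/D
  have hcore : (hh : ℝ) * (m : ℝ) / 2 + 2 * (u hh : ℝ) ^ 2 / (D : ℝ)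
      ≤ (hh : ℝ) * (u hh : ℝ) + (v : ℝ) * ((hh : ℝ) ^ 2) / 2
        + ((∑ s ∈ Finset.range hh, ee s : ℕ) : ℝ) ^ 2 / (2 * ((D : ℝ) - (v : ℝ)))
        + (u hh : ℝ) ^ 2 / (2 * (v : ℝ)) := by
    have hEeq : ((∑ s ∈ Finset.range hh, ee s : ℕ) : ℝ)
        = (m : ℝ) - (u hh : ℝ) - (hh : ℝ) * (v : ℝ) := by linarith
    have hv0' : (v : ℝ) ≠ 0 := ne_of_gt hvR0
    have hDv0' : (D : ℝ) - (v : ℝ) ≠ 0 := ne_of_gt hDvR0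
    have hD0' : (D : ℝ) ≠ 0 := ne_of_gt hDR0
    have hident : ((hh : ℝ) * (u hh : ℝ) + (v : ℝ) * ((hh : ℝ) ^ 2) / 2
          + ((∑ s ∈ Finset.range hh, ee s : ℕ) : ℝ) ^ 2 / (2 * ((D : ℝ) - (v : ℝ)))
          + (u hh : ℝ) ^ 2 / (2 * (v : ℝ)))
          - ((hh : ℝ) * (m : ℝ) / 2 + 2 * (u hh : ℝ) ^ 2 / (D : ℝ))
        = ((u hh : ℝ) * (2 * (v : ℝ) - (D : ℝ))) ^ 2
            / (2 * (v : ℝ) * (D : ℝ) * ((D : ℝ) - (v : ℝ))) := by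
      rw [hEeq, ← hDmR]
      field_simp
      ring
    have hQ0 : (0 : ℝ) ≤ ((u hh : ℝ) * (2 * (v : ℝ) - (D : ℝ))) ^ 2
        / (2 * (v : ℝ) * (D : ℝ) * ((D : ℝ) - (v : ℝ))) := by
      apply div_nonneg (sq_nonneg _)
      positivity
    linarith
  have hSVCge : (hh : ℝ) * (m : ℝ) / 2 + 2 * (u hh : ℝ) ^ 2 / (D : ℝ)
      ≤ ((∑ t ∈ Finset.range n, u t : ℕ) : ℝ) := by
    calc (hh : ℝ) * (m : ℝ) / 2 + 2 * (u hh : ℝ) ^ 2 / (D : ℝ)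
        ≤ (hh : ℝ) * (u hh : ℝ) + (v : ℝ) * ((hh : ℝ) ^ 2) / 2
          + ((∑ s ∈ Finset.range hh, ee s : ℕ) : ℝ) ^ 2 / (2 * ((D : ℝ) - (v : ℝ)))
          + (u hh : ℝ) ^ 2 / (2 * (v : ℝ)) := hcore
      _ ≤ (hh : ℝ) * (u hh : ℝ)
          + ((v : ℝ) * ((∑ s ∈ Finset.range hh, (s + 1) : ℕ) : ℝ)
            + ((∑ s ∈ Finset.range hh, (s + 1) * ee s : ℕ) : ℝ))
          + ((K : ℝ) * (u hh : ℝ) - (v : ℝ) * ((K : ℝ) * ((K : ℝ) - 1)) / 2) := by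
          linarith [hq1, hq2, hGGge]
      _ ≤ _ := hSVClower
  have hnR : ((n : ℕ) : ℝ) = 2 * (hh : ℝ) := by exact_mod_cast hn2
  have hfinal : (u hh : ℝ) ^ 2 ≤ δ * (m : ℝ) ^ 2 := by
    have h1 : 2 * (u hh : ℝ) ^ 2 / (D : ℝ) ≤ 2 * δ * ((hh : ℝ) * (m : ℝ)) := by
      have h2 := hval
      rw [hnR] at h2
      linarith
    have h2 : 2 * (u hh : ℝ) ^ 2 ≤ 2 * δ * ((hh : ℝ) * (m : ℝ)) * (D : ℝ) := by
      rw [div_le_iff₀ hDR0] at h1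
      linarith
    have h3 : 2 * δ * ((hh : ℝ) * (m : ℝ)) * (D : ℝ) = 2 * (δ * (m : ℝ) ^ 2) := by
      have h4 : (hh : ℝ) * (m : ℝ) * (D : ℝ) = (m : ℝ) ^ 2 := by
        rw [← hDmR]
        ring
      linear_combination (2 * δ) * h4
    linarith
  have hmR0 : (0 : ℝ) ≤ (m : ℝ) := Nat.cast_nonneg _
  have huR0 : (0 : ℝ) ≤ (u hh : ℝ) := Nat.cast_nonneg _
  calc (u hh : ℝ) = Real.sqrt ((u hh : ℝ) ^ 2) := (Real.sqrt_sq huR0).symm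
    _ ≤ Real.sqrt (δ * (m : ℝ) ^ 2) := Real.sqrt_le_sqrt hfinal
    _ = Real.sqrt δ * (m : ℝ) := by
        rw [Real.sqrt_mul (le_of_lt hδ), Real.sqrt_sq hmR0]

/-- Let `G` be a `D`-regular graph on `n` vertices (`n` even) with
`m = nD/2` edges, let `δ > 0`, and let `σ` be an ordering minimizing `SVC_G`.  If
`SVC_G(σ) ≤ (1/4 + δ)·n·m` then `u_{n/2} ≤ √δ·m`: the optimal ordering covers at least a
`(1 − √δ)` fraction of the edges within the first `n/2` steps. -/
theorem optimal_ordering_covers_most_edges_by_half {V : Type*} [Fintype V] [DecidableEq V]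
    (G : SimpleGraph V) [DecidableRel G.Adj] (D : ℕ) (hreg : G.IsRegularOfDegree D)
    (hEven : Even (Fintype.card V)) (δ : ℝ) (hδ : 0 < δ)
    (σ : Fin (Fintype.card V) ≃ V)
    (hopt : ∀ σ' : Fin (Fintype.card V) ≃ V, SVC G σ ≤ SVC G σ')
    (hval : (SVC G σ : ℝ) ≤ (1 / 4 + δ) * (Fintype.card V : ℝ) * (G.edgeFinset.card : ℝ)) :
    (numUncovered G σ (Fintype.card V / 2) : ℝ) ≤ Real.sqrt δ * (G.edgeFinset.card : ℝ) := by
  by_cases hzero : numUncovered G σ (Fintype.card V / 2) = 0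
  · rw [hzero, Nat.cast_zero]
    positivity
  have hupos : 1 ≤ numUncovered G σ (Fintype.card V / 2) := by omega
  obtain ⟨hh, hn2⟩ : ∃ hh, Fintype.card V = 2 * hh := by
    obtain ⟨hh, h⟩ := hEven
    exact ⟨hh, by omega⟩
  have hhalf : Fintype.card V / 2 = hh := by omega
  rw [hhalf] at hupos ⊢
  -- graph facts
  have hsumdeg : Fintype.card V * D = 2 * G.edgeFinset.card := by
    have h := G.sum_degrees_eq_twice_card_edges
    rw [Finset.sum_congr rfl (fun w _ => hreg w)] at h
    rw [Finset.sum_const, Finset.card_univ, smul_eq_mul] at h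
    exact h
  have hDm : hh * D = G.edgeFinset.card := by
    rw [hn2] at hsumdeg
    have h2 : 2 * (hh * D) = 2 * G.edgeFinset.card := by
      rw [← hsumdeg]
      ring
    exact Nat.eq_of_mul_eq_mul_left (by norm_num) h2
  have hmono : ∀ t t', t ≤ t' → numUncovered G σ t' ≤ numUncovered G σ t := by
    intro t t' h
    apply Finset.card_le_card
    apply Finset.monotone_filter_right
    intro e he
    omega
  have hu0 : numUncovered G σ 0 = G.edgeFinset.card := by
    unfold numUncovered
    rw [Finset.filter_true_of_mem]
    intro e _
    rw [cover_iff]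
    intro w _
    omega
  have hlast : numUncovered G σ (Fintype.card V - 1) = 0 := by
    rw [numUncovered_eq_card]
    rw [Finset.card_eq_zero, Finset.filter_eq_empty_iff]
    intro e he
    rw [SimpleGraph.mem_edgeFinset] at he
    induction e using Sym2.ind with
    | _ x y =>
      have hadj : G.Adj x y := he
      have hne : x ≠ y := hadj.ne
      intro hall
      have hx := hall x (Sym2.mem_mk_left x y)
      have hy := hall y (Sym2.mem_mk_right x y)
      have hx2 : (σ.symm x : ℕ) < Fintype.card V := (σ.symm x).isLt
      have hy2 : (σ.symm y : ℕ) < Fintype.card V := (σ.symm y).isLt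
      have hxy : (σ.symm x : ℕ) = (σ.symm y : ℕ) := by omega
      have hxy2 : σ.symm x = σ.symm y := Fin.ext hxy
      exact hne (σ.symm.injective hxy2)
  have hdeg : ∀ t, t < Fintype.card V →
      numUncovered G σ t ≤ numUncovered G σ (t + 1) + D := by
    intro t ht
    have h := deg_step G σ t ht
    rw [hreg (σ ⟨t, ht⟩)] at h
    exact h
  have hconv : ∀ k, k + 1 < Fintype.card V →
      2 * numUncovered G σ (k + 1) ≤ numUncovered G σ k + numUncovered G σ (k + 2) :=
    fun k hk => convex_step G σ hopt k hk
  exact main_numeric (Fintype.card V) hh D G.edgeFinset.card (numUncovered G σ) δ hδ hn2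
    hmono hu0 hlast hdeg hconv hDm hupos hval
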